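/- arXiv:2305.19578 — 11 statements merged into one kernel-verified Lean document; each statement's English description precedes it below -/
import Mathlib

section
/- Let q_o > q_s > 0, γ_o > 0, γ_s > 0, η = γ_o + γ_s, and suppose condition C1 holds: η q_s/(2 q_o) < γ_o < η/2. Then the revenue function π(p_o, p_s) = γ_o p_o (1 − (p_o − p_s)/(q_o − q_s)) + γ_s p_s ((p_o − p_s)/(q_o − q_s) − p_s/q_s) is strictly concave as a function of (p_o, p_s) ∈ ℝ². -/
/-- Under `q_o > q_s > 0`, `γ_o, γ_s > 0`, `η = γ_o + γ_s`, and
condition C1 (`η q_s/(2 q_o) < γ_o < η/2`), the revenue function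
`π(p_o, p_s) = γ_o p_o (1 − (p_o − p_s)/(q_o − q_s)) + γ_s p_s ((p_o − p_s)/(q_o − q_s) − p_s/q_s)`
is strictly concave on `ℝ²`. -/
theorem revenue_strictConcave
    (qo qs γo γs η : ℝ)
    (hq : qo > qs) (hqs : qs > 0)
    (hγo : 0 < γo) (hγs : 0 < γs)
    (hη : η = γo + γs)
    (hC1l : η * qs / (2 * qo) < γo) (hC1r : γo < η / 2) :
    StrictConcaveOn ℝ (Set.univ : Set (ℝ × ℝ))
      (fun p : ℝ × ℝ =>
        γo * p.1 * (1 - (p.1 - p.2) / (qo - qs)) +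
          γs * p.2 * ((p.1 - p.2) / (qo - qs) - p.2 / qs)) := by
  have hqo : 0 < qo := lt_trans hqs hq
  have hd : 0 < qo - qs := sub_pos.mpr hq
  -- from C1: 4 γo γs qo > (γo+γs)^2 qs
  have h1 : η * qs < 2 * γo * qo := by
    have := (div_lt_iff₀ (by positivity : (0:ℝ) < 2 * qo)).mp hC1l
    linarith
  have h2 : η < 2 * γs := by
    have : 2 * γo < η := by
      have := (lt_div_iff₀ (by norm_num : (0:ℝ) < 2)).mp hC1r
      linarith
    linarith [hη]
  have hdet : (γo + γs)^2 * qs < 4 * γo * γs * qo := by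
    have hηpos : 0 < η := by rw [hη]; positivity
    have := mul_lt_mul'' h1 h2 (by positivity) (le_of_lt hηpos)
    calc (γo + γs)^2 * qs = η * qs * η := by rw [hη]; ring
      _ < 2 * γo * qo * (2 * γs) := this
      _ = 4 * γo * γs * qo := by ring
  constructor
  · exact convex_univ
  · rintro x - y - hxy a b ha hb hab
    set u := x.1 - y.1 with hu
    set v := x.2 - y.2 with hv
    have hne : u ≠ 0 ∨ v ≠ 0 := by
      by_contra h
      push_neg at h
      exact hxy (Prod.ext (by linarith [h.1]) (by linarith [h.2]))
    -- key positivity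
    have key : 0 < γo * qs * u^2 - (γo + γs) * qs * u * v + γs * qo * v^2 := by
      rcases hne with h | h
      · rcases eq_or_ne v 0 with hv0 | hv0
        · rw [hv0]
          have : 0 < u^2 := by positivity
          nlinarith [mul_pos (mul_pos hγo hqs) this]
        · have hv2 : 0 < v^2 := by positivity
          nlinarith [sq_nonneg (2 * γo * u - (γo + γs) * v), mul_pos hγo hqs,
            mul_pos (sub_pos.mpr hdet) hv2]
      · have hv2 : 0 < v^2 := by positivity
        nlinarith [sq_nonneg (2 * γo * u - (γo + γs) * v), mul_pos hγo hqs,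
          mul_pos (sub_pos.mpr hdet) hv2]
    simp only [smul_eq_mul, Prod.smul_mk, Prod.mk_add_mk, Prod.smul_fst, Prod.smul_snd,
      Prod.fst_add, Prod.snd_add]
    rw [← sub_pos]
    have hb' : b = 1 - a := by linarith
    have heq :
        (γo * (a * x.1 + b * y.1) * (1 - (a * x.1 + b * y.1 - (a * x.2 + b * y.2)) / (qo - qs)) +
          γs * (a * x.2 + b * y.2) * ((a * x.1 + b * y.1 - (a * x.2 + b * y.2)) / (qo - qs)
            - (a * x.2 + b * y.2) / qs))
        - (a * (γo * x.1 * (1 - (x.1 - x.2) / (qo - qs)) +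
            γs * x.2 * ((x.1 - x.2) / (qo - qs) - x.2 / qs)) +
          b * (γo * y.1 * (1 - (y.1 - y.2) / (qo - qs)) +
            γs * y.2 * ((y.1 - y.2) / (qo - qs) - y.2 / qs)))
        = a * b * ((γo * qs * u^2 - (γo + γs) * qs * u * v + γs * qo * v^2)
            / ((qo - qs) * qs)) := by
      simp only [hu, hv, hb']
      field_simp
      ring
    rw [heq]
    have : 0 < (γo * qs * u^2 - (γo + γs) * qs * u * v + γs * qo * v^2) / ((qo - qs) * qs) := by
      apply div_pos key (by positivity)
    positivity
end

section
/- Let q_o > q_s > 0, γ_o > 0, γ_s > 0, η = γ_o + γ_s, and suppose condition C1 holds: η q_s/(2 q_o) < γ_o < η/2. Define p_o* = 2 γ_o γ_s q_o (q_o − q_s)/(4 γ_o γ_s q_o − η² q_s) and p_s* = η γ_o q_s (q_o − q_s)/(4 γ_o γ_s q_o − η² q_s). Then p_s* = (γ_o/(γ_o + γ_s)) (2 p_o* − q_o + q_s) and p_o* = 2 γ_s q_o p_s*/((γ_o + γ_s) q_s); i.e. (p_o*, p_s*) simultaneously solves both first-order conditions ∂π/∂p_o = 0 and ∂π/∂p_s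 = 0 of the revenue function π(p_o, p_s) = γ_o p_o (1 − (p_o − p_s)/(q_o − q_s)) + γ_s p_s ((p_o − p_s)/(q_o − q_s) − p_s/q_s). -/
/-!
Each partial revenue function is a quadratic in its own price, so its derivative is affine and the
two first-order conditions form a linear system in `(p_o, p_s)`. The closed-form prices solve that
system; condition C1 is what makes its determinant `4 γ_o γ_s q_o − η² q_s` nonzero.
-/

lemma hasDerivAt_revenue_onDemand {γo γs a b ps : ℝ} (ha : a ≠ 0) (p : ℝ) :
    HasDerivAt (fun p : ℝ => γo * p * (1 - (p - ps) / a) + γs * ps * ((p - ps) / a - ps / b))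
      ((γo * (a - 2 * p) + (γo + γs) * ps) / a) p := by
  have hid := hasDerivAt_id' p
  have hspread := (hid.sub_const ps).div_const a
  refine (((hid.const_mul γo).mul (hspread.const_sub 1)).add
    ((hspread.sub_const (ps / b)).const_mul (γs * ps))).congr_deriv ?_
  field_simp
  ring

lemma hasDerivAt_revenue_spot {γo γs a b po : ℝ} (ha : a ≠ 0) (hb : b ≠ 0) (p : ℝ) :
    HasDerivAt (fun p : ℝ => γo * po * (1 - (po - p) / a) + γs * p * ((po - p) / a - p / b))
      (((γo + γs) * po * b - 2 * γs * p * (a + b)) / (a * b)) p := by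
  have hid := hasDerivAt_id' p
  have hspread := (hid.const_sub po).div_const a
  refine (((hspread.const_sub 1).const_mul (γo * po)).add
    ((hid.const_mul γs).mul (hspread.sub (hid.div_const b)))).congr_deriv ?_
  simp only [Pi.sub_apply]
  field_simp
  ring

lemma equilibrium_denominator_pos {qo qs γo γs : ℝ} (hqs : 0 < qs) (hqo : 0 < qo)
    (hγo : 0 < γo) (hγs : 0 < γs)
    (hC1l : (γo + γs) * qs / (2 * qo) < γo) (hC1r : γo < (γo + γs) / 2) :
    0 < 4 * γo * γs * qo - (γo + γs) ^ 2 * qs := by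
  have hl : (γo + γs) * qs < 2 * γo * qo := by
    have := (div_lt_iff₀ (by positivity : (0 : ℝ) < 2 * qo)).mp hC1l
    linarith
  have hr : γo + γs < 2 * γs := by linarith
  refine sub_pos.mpr ?_
  calc (γo + γs) ^ 2 * qs = (γo + γs) * ((γo + γs) * qs) := by ring
    _ < (2 * γs) * (2 * γo * qo) := mul_lt_mul'' hr hl (by positivity) (by positivity)
    _ = 4 * γo * γs * qo := by ring

/-- Under C1, the equilibrium prices
`p_o* = 2 γ_o γ_s q_o (q_o − q_s)/(4 γ_o γ_s q_o − η² q_s)` and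
`p_s* = η γ_o q_s (q_o − q_s)/(4 γ_o γ_s q_o − η² q_s)` satisfy
`p_s* = (γ_o/(γ_o + γ_s)) (2 p_o* − q_o + q_s)` and
`p_o* = 2 γ_s q_o p_s*/((γ_o + γ_s) q_s)`, i.e. they simultaneously solve both
first-order conditions `∂π/∂p_o = 0` and `∂π/∂p_s = 0` of the revenue
`π(p_o, p_s) = γ_o p_o (1 − (p_o − p_s)/(q_o − q_s)) + γ_s p_s ((p_o − p_s)/(q_o − q_s) − p_s/q_s)`. -/
theorem equilibrium_first_order_conditions
    (qo qs γo γs η po ps : ℝ)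
    (hq : qo > qs) (hqs : qs > 0)
    (hγo : 0 < γo) (hγs : 0 < γs)
    (hη : η = γo + γs)
    (hC1l : η * qs / (2 * qo) < γo) (hC1r : γo < η / 2)
    (hpo : po = 2 * γo * γs * qo * (qo - qs) / (4 * γo * γs * qo - η ^ 2 * qs))
    (hps : ps = η * γo * qs * (qo - qs) / (4 * γo * γs * qo - η ^ 2 * qs)) :
    ps = γo / (γo + γs) * (2 * po - qo + qs) ∧
    po = 2 * γs * qo * ps / ((γo + γs) * qs) ∧
    HasDerivAt (fun p : ℝ =>
        γo * p * (1 - (p - ps) / (qo - qs)) +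
          γs * ps * ((p - ps) / (qo - qs) - ps / qs)) 0 po ∧
    HasDerivAt (fun p : ℝ =>
        γo * po * (1 - (po - p) / (qo - qs)) +
          γs * p * ((po - p) / (qo - qs) - p / qs)) 0 ps := by
  subst hη
  have hspread : qo - qs ≠ 0 := sub_ne_zero.mpr hq.ne'
  have hD := (equilibrium_denominator_pos hqs (hqs.trans hq) hγo hγs hC1l hC1r).ne'
  have hpoD := (eq_div_iff hD).mp hpo
  have hpsD := (eq_div_iff hD).mp hps
  have hspot : (γo + γs) * ps = γo * (2 * po - (qo - qs)) :=
    mul_right_cancel₀ hD (by linear_combination (γo + γs) * hpsD - 2 * γo * hpoD)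
  have honDemand : (γo + γs) * po * qs = 2 * γs * ps * qo :=
    mul_right_cancel₀ hD (by linear_combination (γo + γs) * qs * hpoD - 2 * γs * qo * hpsD)
  have hsum : γo + γs ≠ 0 := by positivity
  refine ⟨?_, ?_, ?_, ?_⟩
  · field_simp
    linear_combination hspot
  · field_simp
    linear_combination honDemand
  · refine (hasDerivAt_revenue_onDemand hspread po).congr_deriv ?_
    rw [hspot]
    ring
  · refine (hasDerivAt_revenue_spot hspread hqs.ne' ps).congr_deriv ?_
    rw [honDemand]
    ring
end

section
/- Let q_o > q_s > 0, γ_o > 0, γ_s > 0, η = γ_o + γ_s, and suppose condition C1 holds: η q_s/(2 q_o) < γ_o < η/2. Then the revenue function π(p_o, p_s) = γ_o p_o (1 − (p_o − p_s)/(q_o − q_s)) + γ_s p_s ((p_o − p_s)/(q_o − q_s) − p_s/q_s) attains a strict global maximum over (p_o, p_s) ∈ ℝ² at the unique point p_o* = 2 γ_o γ_s q_o (q_o − q_s)/(4 γ_o γ_s q_o − η² q_s), p_s* = η γ_o q_s (q_o − q_s)/(4 γ_o γ_s q_o − η² q_s). -/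
/-!
The revenue is a quadratic function of the two prices whose Hessian is negative definite
exactly when `η² q_s < 4 γ_o γ_s q_o`, and condition C1 forces this inequality. A concave
quadratic with negative definite Hessian lies strictly below its value at its critical point
everywhere else, and the stated prices solve the two first-order conditions.
-/

theorem binary_quadratic_form_pos {A B C x y : ℝ} (hA : 0 < A) (hdisc : B ^ 2 < 4 * A * C)
    (hxy : (x, y) ≠ 0) : 0 < A * x ^ 2 - B * x * y + C * y ^ 2 := by
  rcases eq_or_ne y 0 with rfl | hy
  · have hx : x ≠ 0 := fun hx => hxy (by rw [hx]; rfl)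
    have : 0 < A * x ^ 2 := by positivity
    simpa using this
  · have hdisc' : 0 < 4 * A * C - B ^ 2 := sub_pos.2 hdisc
    have hsq : 4 * A * (A * x ^ 2 - B * x * y + C * y ^ 2)
        = (2 * A * x - B * y) ^ 2 + (4 * A * C - B ^ 2) * y ^ 2 := by ring
    have : 0 < 4 * A * (A * x ^ 2 - B * x * y + C * y ^ 2) := by rw [hsq]; positivity
    exact pos_of_mul_pos_right this (by positivity)

theorem quadratic_lt_of_isCritical {A B C d e a b x y : ℝ} (hA : 0 < A)
    (hdisc : B ^ 2 < 4 * A * C) (ha : 2 * A * a - B * b = d) (hb : 2 * C * b - B * a = e)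
    (hne : (x, y) ≠ (a, b)) :
    d * x + e * y - (A * x ^ 2 - B * x * y + C * y ^ 2) <
      d * a + e * b - (A * a ^ 2 - B * a * b + C * b ^ 2) := by
  have hpos := binary_quadratic_form_pos (x := x - a) (y := y - b) hA hdisc (sub_ne_zero.2 hne)
  subst ha hb
  linear_combination hpos

section Revenue

variable (qo qs γo γs : ℝ)

noncomputable def revenue (po ps : ℝ) : ℝ :=
  γo * po * (1 - (po - ps) / (qo - qs)) + γs * ps * ((po - ps) / (qo - qs) - ps / qs)

theorem revenue_eq_quadratic (po ps : ℝ) :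
    revenue qo qs γo γs po ps =
      γo * po + 0 * ps - (γo / (qo - qs) * po ^ 2 - (γo + γs) / (qo - qs) * po * ps
        + (γs / (qo - qs) + γs / qs) * ps ^ 2) := by
  unfold revenue
  ring

variable {qo qs γo γs}

theorem revenue_hessian_disc_lt (hD : 0 < qo - qs) (hqs : 0 < qs)
    (hΔ : (γo + γs) ^ 2 * qs < 4 * γo * γs * qo) :
    ((γo + γs) / (qo - qs)) ^ 2 < 4 * (γo / (qo - qs)) * (γs / (qo - qs) + γs / qs) := by
  have hgap : 4 * (γo / (qo - qs)) * (γs / (qo - qs) + γs / qs) - ((γo + γs) / (qo - qs)) ^ 2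
      = (4 * γo * γs * qo - (γo + γs) ^ 2 * qs) / ((qo - qs) ^ 2 * qs) := by
    field_simp
    ring
  have : 0 < 4 * γo * γs * qo - (γo + γs) ^ 2 * qs := sub_pos.2 hΔ
  have : 0 < (4 * γo * γs * qo - (γo + γs) ^ 2 * qs) / ((qo - qs) ^ 2 * qs) := by positivity
  linarith

theorem revenue_lt_of_isCritical {a b po ps : ℝ} (hD : 0 < qo - qs) (hqs : 0 < qs)
    (hγo : 0 < γo) (hΔ : (γo + γs) ^ 2 * qs < 4 * γo * γs * qo)
    (ha : 2 * γo * a - (γo + γs) * b = γo * (qo - qs))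
    (hb : 2 * γs * qo * b = (γo + γs) * qs * a) (hne : (po, ps) ≠ (a, b)) :
    revenue qo qs γo γs po ps < revenue qo qs γo γs a b := by
  have ha' : 2 * (γo / (qo - qs)) * a - (γo + γs) / (qo - qs) * b = γo := by
    field_simp
    linarith
  have hb' : 2 * (γs / (qo - qs) + γs / qs) * b - (γo + γs) / (qo - qs) * a = 0 := by
    field_simp
    linear_combination hb
  rw [revenue_eq_quadratic, revenue_eq_quadratic]
  exact quadratic_lt_of_isCritical (by positivity) (revenue_hessian_disc_lt hD hqs hΔ) ha' hb' hne

theorem hessian_disc_lt_of_C1 (hqs : 0 < qs) (hq : qs < qo) (hγo : 0 < γo)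
    (hC1l : (γo + γs) * qs / (2 * qo) < γo) (hC1r : γo < (γo + γs) / 2) :
    (γo + γs) ^ 2 * qs < 4 * γo * γs * qo := by
  have hqo : 0 < qo := hqs.trans hq
  have hl : (γo + γs) * qs < 2 * γo * qo := by
    rw [div_lt_iff₀ (by positivity)] at hC1l
    linarith
  have hη : 0 < γo + γs := by linarith
  calc (γo + γs) ^ 2 * qs = (γo + γs) * ((γo + γs) * qs) := by ring
    _ < (γo + γs) * (2 * γo * qo) := mul_lt_mul_of_pos_left hl hη
    _ < 2 * γs * (2 * γo * qo) := mul_lt_mul_of_pos_right (by linarith) (by positivity)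
    _ = 4 * γo * γs * qo := by ring

theorem optimal_prices_isCritical (hΔ : 4 * γo * γs * qo - (γo + γs) ^ 2 * qs ≠ 0) :
    let a := 2 * γo * γs * qo * (qo - qs) / (4 * γo * γs * qo - (γo + γs) ^ 2 * qs)
    let b := (γo + γs) * γo * qs * (qo - qs) / (4 * γo * γs * qo - (γo + γs) ^ 2 * qs)
    2 * γo * a - (γo + γs) * b = γo * (qo - qs) ∧ 2 * γs * qo * b = (γo + γs) * qs * a := by
  constructor
  · rw [mul_div_assoc', mul_div_assoc', ← sub_div, div_eq_iff hΔ]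
    ring
  · field_simp

end Revenue

theorem revenue_strict_global_max_general
    (qo qs γo γs η : ℝ)
    (hq : qo > qs) (hqs : qs > 0)
    (hγo : 0 < γo)
    (hη : η = γo + γs)
    (hC1l : η * qs / (2 * qo) < γo) (hC1r : γo < η / 2) :
    ∀ po ps : ℝ,
      (po, ps) ≠ (2 * γo * γs * qo * (qo - qs) / (4 * γo * γs * qo - η ^ 2 * qs),
                   η * γo * qs * (qo - qs) / (4 * γo * γs * qo - η ^ 2 * qs)) →
      γo * po * (1 - (po - ps) / (qo - qs)) +
          γs * ps * ((po - ps) / (qo - qs) - ps / qs) <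
        γo * (2 * γo * γs * qo * (qo - qs) / (4 * γo * γs * qo - η ^ 2 * qs)) *
            (1 - ((2 * γo * γs * qo * (qo - qs) / (4 * γo * γs * qo - η ^ 2 * qs)) -
                  (η * γo * qs * (qo - qs) / (4 * γo * γs * qo - η ^ 2 * qs))) / (qo - qs)) +
          γs * (η * γo * qs * (qo - qs) / (4 * γo * γs * qo - η ^ 2 * qs)) *
            ((((2 * γo * γs * qo * (qo - qs) / (4 * γo * γs * qo - η ^ 2 * qs)) -
               (η * γo * qs * (qo - qs) / (4 * γo * γs * qo - η ^ 2 * qs))) / (qo - qs)) -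
              (η * γo * qs * (qo - qs) / (4 * γo * γs * qo - η ^ 2 * qs)) / qs) := by
  subst hη
  intro po ps hne
  have hΔ := hessian_disc_lt_of_C1 hqs hq hγo hC1l hC1r
  obtain ⟨ha, hb⟩ := optimal_prices_isCritical (sub_pos.2 hΔ).ne'
  exact revenue_lt_of_isCritical (sub_pos.2 hq) hqs hγo hΔ ha hb hne

/-- Under C1, the revenue function
`π(p_o, p_s) = γ_o p_o (1 − (p_o − p_s)/(q_o − q_s)) + γ_s p_s ((p_o − p_s)/(q_o − q_s) − p_s/q_s)`
attains a strict global maximum over `(p_o, p_s) ∈ ℝ²` at the unique point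
`p_o* = 2 γ_o γ_s q_o (q_o − q_s)/(4 γ_o γ_s q_o − η² q_s)`,
`p_s* = η γ_o q_s (q_o − q_s)/(4 γ_o γ_s q_o − η² q_s)`. -/
theorem revenue_strict_global_max
    (qo qs γo γs η : ℝ)
    (hq : qo > qs) (hqs : qs > 0)
    (hγo : 0 < γo) (hγs : 0 < γs)
    (hη : η = γo + γs)
    (hC1l : η * qs / (2 * qo) < γo) (hC1r : γo < η / 2) :
    ∀ po ps : ℝ,
      (po, ps) ≠ (2 * γo * γs * qo * (qo - qs) / (4 * γo * γs * qo - η ^ 2 * qs),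
                   η * γo * qs * (qo - qs) / (4 * γo * γs * qo - η ^ 2 * qs)) →
      γo * po * (1 - (po - ps) / (qo - qs)) +
          γs * ps * ((po - ps) / (qo - qs) - ps / qs) <
        γo * (2 * γo * γs * qo * (qo - qs) / (4 * γo * γs * qo - η ^ 2 * qs)) *
            (1 - ((2 * γo * γs * qo * (qo - qs) / (4 * γo * γs * qo - η ^ 2 * qs)) -
                  (η * γo * qs * (qo - qs) / (4 * γo * γs * qo - η ^ 2 * qs))) / (qo - qs)) +
          γs * (η * γo * qs * (qo - qs) / (4 * γo * γs * qo - η ^ 2 * qs)) *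
            ((((2 * γo * γs * qo * (qo - qs) / (4 * γo * γs * qo - η ^ 2 * qs)) -
               (η * γo * qs * (qo - qs) / (4 * γo * γs * qo - η ^ 2 * qs))) / (qo - qs)) -
              (η * γo * qs * (qo - qs) / (4 * γo * γs * qo - η ^ 2 * qs)) / qs) :=
  revenue_strict_global_max_general qo qs γo γs η hq hqs hγo hη hC1l hC1r
end

section
/- Let q_o > q_s > 0, γ_o > 0, γ_s > 0, η = γ_o + γ_s, and suppose condition C1 holds: η q_s/(2 q_o) < γ_o < η/2. Then the equilibrium on-demand price with spot service exceeds the on-demand-only equilibrium price: 2 γ_o γ_s q_o (q_o − q_s)/(4 γ_o γ_s q_o − η² q_s) > q_o/2. -/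
/-- Under C1, the equilibrium on-demand price with spot service
exceeds the on-demand-only equilibrium price:
`2 γ_o γ_s q_o (q_o − q_s)/(4 γ_o γ_s q_o − η² q_s) > q_o/2`. -/
theorem price_dominance
    (qo qs γo γs η : ℝ)
    (hq : qo > qs) (hqs : qs > 0)
    (hγo : 0 < γo) (hγs : 0 < γs)
    (hη : η = γo + γs)
    (hC1l : η * qs / (2 * qo) < γo) (hC1r : γo < η / 2) :
    2 * γo * γs * qo * (qo - qs) / (4 * γo * γs * qo - η ^ 2 * qs) > qo / 2 := by
  have hqo : 0 < qo := lt_trans hqs hq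
  have hγ : γo < γs := by rw [hη] at hC1r; linarith
  have hl : η * qs < γo * (2 * qo) := (div_lt_iff₀ (by positivity)).mp hC1l
  have hD : 0 < 4 * γo * γs * qo - η ^ 2 * qs := by nlinarith [mul_pos hγo hqo, mul_pos hγo (sub_pos.2 hγ)]
  rw [gt_iff_lt, div_lt_div_iff₀ (by norm_num) hD]
  subst hη
  nlinarith [mul_pos (mul_pos hqo hqs) (mul_pos (sub_pos.2 hγ) (sub_pos.2 hγ))]
end

section
/- Let q_o > q_s > 0, γ_o > 0, γ_s > 0, η = γ_o + γ_s, and suppose condition C1 holds: η q_s/(2 q_o) < γ_o < η/2. Then the equilibrium on-demand market share with spot service is strictly smaller than the on-demand-only market share: γ_s (2 γ_o q_o − η q_s)/(4 γ_o γ_s q_o − η² q_s) < 1/2. -/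
/-- Under C1, the equilibrium on-demand market share with spot
service is strictly smaller than the on-demand-only market share:
`γ_s (2 γ_o q_o − η q_s)/(4 γ_o γ_s q_o − η² q_s) < 1/2`. -/
theorem on_demand_market_share_shrinks
    (qo qs γo γs η : ℝ)
    (hq : qo > qs) (hqs : qs > 0)
    (hγo : 0 < γo) (hγs : 0 < γs)
    (hη : η = γo + γs)
    (hC1l : η * qs / (2 * qo) < γo) (hC1r : γo < η / 2) :
    γs * (2 * γo * qo - η * qs) / (4 * γo * γs * qo - η ^ 2 * qs) < 1 / 2 := by
  have hqo : (0:ℝ) < qo := lt_trans hqs hq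
  have hl : η * qs < 2 * γo * qo := by
    rw [div_lt_iff₀ (by positivity)] at hC1l; linarith
  have hgs : γo < γs := by rw [hη] at hC1r; linarith
  have hηpos : 0 < η := by rw [hη]; linarith
  have key : 0 < (γs - γo) * η * qs := by apply mul_pos (mul_pos (by linarith) hηpos) hqs
  have hD : 0 < 4 * γo * γs * qo - η ^ 2 * qs := by
    nlinarith [mul_lt_mul_of_pos_left hl hγs]
  rw [div_lt_div_iff₀ hD (by norm_num)]
  nlinarith [key]
end

section
/- Let q_o > q_s > 0, γ_o > 0, γ_s > 0, η = γ_o + γ_s, and suppose condition C1 holds: η q_s/(2 q_o) < γ_o < η/2. Then the total equilibrium market share with both services exceeds the on-demand-only market share: γ_s (2 γ_o q_o − η q_s)/(4 γ_o γ_s q_o − η² q_s) + γ_o (γ_s − γ_o) q_o/(4 γ_o γ_s q_o − η² q_s) > 1/2. -/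
/-!
Put `a := 2 γo qo - η qs` and `b := γs - γo`; for `qo > 0` the two halves of C1 say `0 < a`
and `0 < b`. Once `η = γo + γs`, the common denominator is `2 γo qo b + η a > 0`, and twice the
sum of the numerators exceeds it by exactly `a b > 0`.
-/

namespace SpotMarket

variable {qo qs γo γs η : ℝ}

lemma sub_pos_of_c1_left (hqo : 0 < qo) (h : η * qs / (2 * qo) < γo) :
    0 < 2 * γo * qo - η * qs := by
  rw [div_lt_iff₀ (by positivity)] at h
  linarith

lemma lt_of_c1_right (hη : η = γo + γs) (h : γo < η / 2) : γo < γs := by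
  subst hη
  linarith

lemma denom_eq (hη : η = γo + γs) :
    4 * γo * γs * qo - η ^ 2 * qs =
      2 * γo * qo * (γs - γo) + η * (2 * γo * qo - η * qs) := by
  subst hη
  ring

lemma two_mul_numer_sub_denom (hη : η = γo + γs) :
    2 * (γs * (2 * γo * qo - η * qs) + γo * (γs - γo) * qo) - (4 * γo * γs * qo - η ^ 2 * qs) =
      (γs - γo) * (2 * γo * qo - η * qs) := by
  subst hη
  ring

end SpotMarket

theorem total_market_share_grows_general
    (qo qs γo γs η : ℝ)
    (hq : qo > qs) (hqs : qs > 0)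
    (hγo : 0 < γo)
    (hη : η = γo + γs)
    (hC1l : η * qs / (2 * qo) < γo) (hC1r : γo < η / 2) :
    γs * (2 * γo * qo - η * qs) / (4 * γo * γs * qo - η ^ 2 * qs) +
        γo * (γs - γo) * qo / (4 * γo * γs * qo - η ^ 2 * qs) > 1 / 2 := by
  have hqo : 0 < qo := hqs.trans hq
  have ha := SpotMarket.sub_pos_of_c1_left hqo hC1l
  have hb : 0 < γs - γo := sub_pos.2 (SpotMarket.lt_of_c1_right hη hC1r)
  have hη_pos : 0 < η := by linarith
  have hD : 0 < 4 * γo * γs * qo - η ^ 2 * qs := by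
    rw [SpotMarket.denom_eq hη]
    positivity
  rw [← add_div, gt_iff_lt, lt_div_iff₀ hD]
  linarith [SpotMarket.two_mul_numer_sub_denom (qo := qo) (qs := qs) hη, mul_pos hb ha]

/-- Under C1, the total equilibrium market share with both
services exceeds the on-demand-only market share:
`γ_s (2 γ_o q_o − η q_s)/(4 γ_o γ_s q_o − η² q_s) + γ_o (γ_s − γ_o) q_o/(4 γ_o γ_s q_o − η² q_s) > 1/2`. -/
theorem total_market_share_grows
    (qo qs γo γs η : ℝ)
    (hq : qo > qs) (hqs : qs > 0)
    (hγo : 0 < γo) (hγs : 0 < γs)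
    (hη : η = γo + γs)
    (hC1l : η * qs / (2 * qo) < γo) (hC1r : γo < η / 2) :
    γs * (2 * γo * qo - η * qs) / (4 * γo * γs * qo - η ^ 2 * qs) +
        γo * (γs - γo) * qo / (4 * γo * γs * qo - η ^ 2 * qs) > 1 / 2 :=
  total_market_share_grows_general qo qs γo γs η hq hqs hγo hη hC1l hC1r
end

section
/- Let q_o > q_s > 0, γ_o > 0, γ_s > 0, η = γ_o + γ_s, and suppose condition C1 holds: η q_s/(2 q_o) < γ_o < η/2. Then the equilibrium revenue with both services strictly exceeds the on-demand-only equilibrium revenue: γ_o² γ_s q_o (q_o − q_s)/(4 γ_o γ_s q_o − η² q_s) > γ_o q_o/4. -/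
/-- Under C1, the equilibrium revenue with both services strictly
exceeds the on-demand-only equilibrium revenue:
`γ_o² γ_s q_o (q_o − q_s)/(4 γ_o γ_s q_o − η² q_s) > γ_o q_o/4`. -/
theorem revenue_dominance
    (qo qs γo γs η : ℝ)
    (hq : qo > qs) (hqs : qs > 0)
    (hγo : 0 < γo) (hγs : 0 < γs)
    (hη : η = γo + γs)
    (hC1l : η * qs / (2 * qo) < γo) (hC1r : γo < η / 2) :
    γo ^ 2 * γs * qo * (qo - qs) / (4 * γo * γs * qo - η ^ 2 * qs) >
      γo * qo / 4 := by
  subst hη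
  have hqo : (0:ℝ) < qo := lt_trans hqs hq
  have hl : (γo + γs) * qs < γo * (2 * qo) :=
    (div_lt_iff₀ (by positivity)).mp hC1l
  have hos : γo < γs := by linarith [hC1r]
  have hD : 0 < 4 * γo * γs * qo - (γo + γs) ^ 2 * qs := by
    nlinarith [mul_pos hγs (sub_pos.mpr hl), mul_pos (add_pos hγo hγs) hqs]
  have hsq : 0 < (γo - γs) ^ 2 := by nlinarith
  rw [gt_iff_lt, div_lt_div_iff₀ (by norm_num) hD]
  nlinarith [mul_pos (mul_pos (mul_pos hγo hqo) hqs) hsq]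
end

section
/- Let q_o > q_s > 0, γ_o > 0, γ_s > 0, η = γ_o + γ_s, and suppose condition C1 holds: η q_s/(2 q_o) < γ_o < η/2. Then both equilibrium market shares are strictly positive: γ_s (2 γ_o q_o − η q_s)/(4 γ_o γ_s q_o − η² q_s) > 0 and γ_o (γ_s − γ_o) q_o/(4 γ_o γ_s q_o − η² q_s) > 0. -/
/-- Under C1, both equilibrium market shares are strictly
positive: `γ_s (2 γ_o q_o − η q_s)/(4 γ_o γ_s q_o − η² q_s) > 0` and
`γ_o (γ_s − γ_o) q_o/(4 γ_o γ_s q_o − η² q_s) > 0`. -/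
theorem market_shares_positive
    (qo qs γo γs η : ℝ)
    (hq : qo > qs) (hqs : qs > 0)
    (hγo : 0 < γo) (hγs : 0 < γs)
    (hη : η = γo + γs)
    (hC1l : η * qs / (2 * qo) < γo) (hC1r : γo < η / 2) :
    γs * (2 * γo * qo - η * qs) / (4 * γo * γs * qo - η ^ 2 * qs) > 0 ∧
    γo * (γs - γo) * qo / (4 * γo * γs * qo - η ^ 2 * qs) > 0 := by
  have hqo : (0:ℝ) < qo := lt_trans hqs hq
  have h1 : η * qs < 2 * γo * qo := by
    have := (div_lt_iff₀ (by linarith : (0:ℝ) < 2 * qo)).mp hC1l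
    linarith
  have hγsγo : γo < γs := by rw [hη] at hC1r; linarith
  have hηpos : 0 < η := by rw [hη]; linarith
  have hden : 0 < 4 * γo * γs * qo - η ^ 2 * qs := by
    have h2 : η ^ 2 * qs < η * (2 * γo * qo) := by
      have := mul_lt_mul_of_pos_left h1 hηpos
      calc η ^ 2 * qs = η * (η * qs) := by ring
        _ < η * (2 * γo * qo) := this
    nlinarith [mul_pos hγo hqo]
  constructor
  · exact div_pos (by nlinarith) hden
  · exact div_pos (by nlinarith [mul_pos hγo hqo]) hden
end

section
/- Let q_o > q_s > 0, γ_o > 0, γ_s > 0, η = γ_o + γ_s, and suppose condition C1 holds: η q_s/(2 q_o) < γ_o < η/2. Let p_o* = 2 γ_o γ_s q_o (q_o − q_s)/(4 γ_o γ_s q_o − η² q_s) and p_s* = η γ_o q_s (q_o − q_s)/(4 γ_o γ_s q_o − η² q_s). Then 0 < p_s* < p_o* and the equilibrium prices satisfy condition C0: p_o*/q_o > p_s*/q_s. -/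
/-- Under C1, the equilibrium prices
`p_o* = 2 γ_o γ_s q_o (q_o − q_s)/(4 γ_o γ_s q_o − η² q_s)` and
`p_s* = η γ_o q_s (q_o − q_s)/(4 γ_o γ_s q_o − η² q_s)` satisfy
`0 < p_s* < p_o*` and condition C0: `p_o*/q_o > p_s*/q_s`. -/
theorem equilibrium_prices_positive_and_C0
    (qo qs γo γs η po ps : ℝ)
    (hq : qo > qs) (hqs : qs > 0)
    (hγo : 0 < γo) (hγs : 0 < γs)
    (hη : η = γo + γs)
    (hC1l : η * qs / (2 * qo) < γo) (hC1r : γo < η / 2)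
    (hpo : po = 2 * γo * γs * qo * (qo - qs) / (4 * γo * γs * qo - η ^ 2 * qs))
    (hps : ps = η * γo * qs * (qo - qs) / (4 * γo * γs * qo - η ^ 2 * qs)) :
    0 < ps ∧ ps < po ∧ po / qo > ps / qs := by
  have hqo : 0 < qo := hqs.trans hq
  have hηpos : 0 < η := by rw [hη]; linarith
  have hkey : η * qs < γo * (2 * qo) := (div_lt_iff₀ (by positivity)).mp hC1l
  have hγoγs : γo < γs := by rw [hη] at hC1r; linarith
  have hD : 0 < 4 * γo * γs * qo - η ^ 2 * qs := by nlinarith [mul_lt_mul_of_pos_left hkey hηpos, mul_pos (mul_pos hγo (sub_pos.mpr hγoγs)) hqo]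
  have hsub : 0 < qo - qs := sub_pos.mpr hq
  have h1 : 0 < 2 * γs * qo - η * qs := by nlinarith
  refine ⟨?_, ?_, ?_⟩
  · rw [hps]
    exact div_pos (mul_pos (mul_pos (mul_pos hηpos hγo) hqs) hsub) hD
  · rw [hps, hpo, div_lt_div_iff₀ hD hD]
    nlinarith [mul_pos (mul_pos (mul_pos hγo h1) hsub) hD]
  · rw [gt_iff_lt, div_lt_div_iff₀ hqs hqo, hps, hpo,
      div_mul_eq_mul_div, div_mul_eq_mul_div, div_lt_div_iff₀ hD hD]
    nlinarith [mul_pos (mul_pos (mul_pos (mul_pos (mul_pos hγo hqs) hqo) hsub) hD) (sub_pos.mpr hγoγs)]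
end

section
/- Let q_o > q_s > 0, γ_o > 0, γ_s > 0, η = γ_o + γ_s, and suppose condition C1 holds: η q_s/(2 q_o) < γ_o < η/2. Let p_o* = 2 γ_o γ_s q_o (q_o − q_s)/(4 γ_o γ_s q_o − η² q_s) and p_s* = η γ_o q_s (q_o − q_s)/(4 γ_o γ_s q_o − η² q_s). Then the customer thresholds at equilibrium equal p_s*/q_s = η γ_o (q_o − q_s)/(4 γ_o γ_s q_o − η² q_s) and (p_o* − p_s*)/(q_o − q_s) = (2 γ_o γ_s q_o − η γ_o q_s)/(4 γ_o γ_s q_o − η² q_s), and these thresholds satisfy 0 < p_s*/q_s < (p_o* − p_s*)/(q_o − q_s) < 1. -/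
/-- Under C1, with the equilibrium prices
`p_o* = 2 γ_o γ_s q_o (q_o − q_s)/(4 γ_o γ_s q_o − η² q_s)` and
`p_s* = η γ_o q_s (q_o − q_s)/(4 γ_o γ_s q_o − η² q_s)`, the customer thresholds
equal `p_s*/q_s = η γ_o (q_o − q_s)/(4 γ_o γ_s q_o − η² q_s)` and
`(p_o* − p_s*)/(q_o − q_s) = (2 γ_o γ_s q_o − η γ_o q_s)/(4 γ_o γ_s q_o − η² q_s)`,
and satisfy `0 < p_s*/q_s < (p_o* − p_s*)/(q_o − q_s) < 1`. -/
theorem equilibrium_thresholds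
    (qo qs γo γs η po ps : ℝ)
    (hq : qo > qs) (hqs : qs > 0)
    (hγo : 0 < γo) (hγs : 0 < γs)
    (hη : η = γo + γs)
    (hC1l : η * qs / (2 * qo) < γo) (hC1r : γo < η / 2)
    (hpo : po = 2 * γo * γs * qo * (qo - qs) / (4 * γo * γs * qo - η ^ 2 * qs))
    (hps : ps = η * γo * qs * (qo - qs) / (4 * γo * γs * qo - η ^ 2 * qs)) :
    ps / qs = η * γo * (qo - qs) / (4 * γo * γs * qo - η ^ 2 * qs) ∧
    (po - ps) / (qo - qs) =
        (2 * γo * γs * qo - η * γo * qs) / (4 * γo * γs * qo - η ^ 2 * qs) ∧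
    0 < ps / qs ∧ ps / qs < (po - ps) / (qo - qs) ∧ (po - ps) / (qo - qs) < 1 := by
  have hqo : 0 < qo := lt_trans hqs hq
  have hgg : γo < γs := by
    rw [hη] at hC1r; linarith
  have hηpos : 0 < η := by rw [hη]; linarith
  have h1 : η * qs < 2 * γo * qo := by
    rw [div_lt_iff₀ (by positivity)] at hC1l; linarith
  have hD : 0 < 4 * γo * γs * qo - η ^ 2 * qs := by
    nlinarith [mul_lt_mul_of_pos_left h1 hηpos,
      mul_pos (mul_pos hγo hqo) (sub_pos.mpr hgg)]
  have hqq : qo - qs ≠ 0 := by linarith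
  have e1 : ps / qs = η * γo * (qo - qs) / (4 * γo * γs * qo - η ^ 2 * qs) := by
    rw [hps]; field_simp
  have e2 : (po - ps) / (qo - qs) =
      (2 * γo * γs * qo - η * γo * qs) / (4 * γo * γs * qo - η ^ 2 * qs) := by
    rw [hpo, hps]; rw [div_sub_div_same, div_div]
    rw [div_eq_div_iff (by positivity) hD.ne']
    ring
  refine ⟨e1, e2, ?_, ?_, ?_⟩
  · rw [e1]
    exact div_pos (mul_pos (mul_pos hηpos hγo) (by linarith)) hD
  · rw [e1, e2, div_lt_div_iff₀ hD hD]
    nlinarith [mul_pos (mul_pos hD (mul_pos hγo hqo)) (sub_pos.mpr hgg)]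
  · rw [e2, div_lt_one hD]
    nlinarith [mul_lt_mul_of_pos_left h1 hγs]
end

section
/- Let q_o > q_s > 0, γ_o > 0, γ_s > 0, η = γ_o + γ_s, and suppose condition C1 holds: η q_s/(2 q_o) < γ_o < η/2. Let p_s* = η γ_o q_s (q_o − q_s)/(4 γ_o γ_s q_o − η² q_s). Then the aggregate customers' utility of the spot service at equilibrium satisfies ∫_{θ_0}^{θ_1} γ_s (θ q_s − p_s*) dθ = γ_o² γ_s q_o² q_s (γ_s − γ_o)² / (2 (4 γ_o γ_s q_o − η² q_s)²), where θ_0 = η γ_o (q_o − q_s)/(4 γ_o γ_s q_o − η² q_s) and θ_1 = (2 γ_o γ_s q_o − η γ_o q_s)/(4 γ_o γ_s q_o − η² q_s) are the equilibrium spot and on-demand thresholds. -/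
open intervalIntegral

/-- Under C1, with
`p_s* = η γ_o q_s (q_o − q_s)/(4 γ_o γ_s q_o − η² q_s)`, equilibrium spot
threshold `θ₀ = η γ_o (q_o − q_s)/(4 γ_o γ_s q_o − η² q_s)` and on-demand
threshold `θ₁ = (2 γ_o γ_s q_o − η γ_o q_s)/(4 γ_o γ_s q_o − η² q_s)`, the
aggregate spot customers' utility satisfies
`∫_{θ₀}^{θ₁} γ_s (θ q_s − p_s*) dθ = γ_o² γ_s q_o² q_s (γ_s − γ_o)² / (2 (4 γ_o γ_s q_o − η² q_s)²)`. -/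
theorem aggregate_spot_utility
    (qo qs γo γs η ps θ₀ θ₁ : ℝ)
    (hq : qo > qs) (hqs : qs > 0)
    (hγo : 0 < γo) (hγs : 0 < γs)
    (hη : η = γo + γs)
    (hC1l : η * qs / (2 * qo) < γo) (hC1r : γo < η / 2)
    (hps : ps = η * γo * qs * (qo - qs) / (4 * γo * γs * qo - η ^ 2 * qs))
    (hθ₀ : θ₀ = η * γo * (qo - qs) / (4 * γo * γs * qo - η ^ 2 * qs))
    (hθ₁ : θ₁ = (2 * γo * γs * qo - η * γo * qs) / (4 * γo * γs * qo - η ^ 2 * qs)) :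
    ∫ θ in θ₀..θ₁, γs * (θ * qs - ps) =
      γo ^ 2 * γs * qo ^ 2 * qs * (γs - γo) ^ 2 /
        (2 * (4 * γo * γs * qo - η ^ 2 * qs) ^ 2) := by
  have hqo : 0 < qo := lt_trans hqs hq
  have h1 : η * qs < 2 * γo * qo := by
    rw [div_lt_iff₀ (by positivity)] at hC1l; linarith
  have h2 : η < 2 * γs := by rw [hη] at hC1r ⊢; linarith
  have hηpos : 0 < η := by rw [hη]; positivity
  have hD : 0 < 4 * γo * γs * qo - η ^ 2 * qs := by
    have : η ^ 2 * qs = η * (η * qs) := by ring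
    nlinarith [mul_lt_mul_of_pos_left h1 hηpos,
      mul_lt_mul_of_pos_right h2 (mul_pos hγo hqo)]
  have hDne : (4 * γo * γs * qo - η ^ 2 * qs) ≠ 0 := ne_of_gt hD
  have key : ∫ θ in θ₀..θ₁, γs * (θ * qs - ps)
      = γs * ((θ₁ ^ 2 - θ₀ ^ 2) / 2 * qs - ps * (θ₁ - θ₀)) := by
    rw [intervalIntegral.integral_const_mul]
    congr 1
    rw [intervalIntegral.integral_sub (by
        exact (intervalIntegrable_id).mul_const qs) intervalIntegrable_const,
      intervalIntegral.integral_mul_const, integral_id, integral_const, smul_eq_mul]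
    ring
  subst hη
  rw [key, hps, hθ₀, hθ₁]
  field_simp
  ring
end
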